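/- arXiv:1902.02285 — 2 statements merged into one kernel-verified Lean document; each statement's English description precedes it below -/
import Mathlib

section
/- Let A be an n×n complex matrix, θ ∈ ℂ, u ∈ ℂⁿ a unit vector, t, w ∈ ℂⁿ, k ∈ ℂ, and set E = k·u·w*. If the stationarity condition −(I−uu*)E*(u + (I−uu*)t) + (I−uu*)((A−θI)*(A−θI) + E)u = 0 holds, then the component of w orthogonal to u is determined by conj(k)·(I−uu*)w = ((A−θI)*(A−θI) − ‖(A−θI)u‖²·I)u; in particular, for k ≠ 0 the component of w orthogonal to u is parallel to ((A−θI)*(A−θI) − ‖(A−θI)u‖²·I)u. -/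
open scoped ComplexInnerProductSpace Matrix

/-- The action of a matrix on a vector of `EuclideanSpace ℂ (Fin n)`. -/
noncomputable def mApp {n : ℕ} (A : Matrix (Fin n) (Fin n) ℂ)
    (v : EuclideanSpace ℂ (Fin n)) : EuclideanSpace ℂ (Fin n) :=
  Matrix.toEuclideanLin A v

/-- The orthogonal projection `(I - uu*) t = t - ⟪u, t⟫ u` onto the orthogonal
complement of the unit vector `u`. -/
noncomputable def proj {n : ℕ} (u t : EuclideanSpace ℂ (Fin n)) :
    EuclideanSpace ℂ (Fin n) :=
  t - ⟪u, t⟫ • u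

/-- The rank-one matrix `u·w*` with entries `u i * conj (w j)`. -/
noncomputable def outer {n : ℕ} (u w : EuclideanSpace ℂ (Fin n)) :
    Matrix (Fin n) (Fin n) ℂ :=
  Matrix.of fun i j => u i * star (w j)

/-
The stationarity condition splits along `u` and its orthogonal complement. Since `E = k u w*`
maps everything into `span {u}`, the term `(I - uu*) E u` vanishes, and since
`⟪u, u + (I - uu*) t⟫ = 1`, the term `E* (u + (I - uu*) t)` is just `conj k • w`. What remains is
`conj k • (I - uu*) w = (I - uu*) B u` with `B = (A - θI)*(A - θI)`, and
`⟪u, B u⟫ = ‖(A - θI) u‖²`.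
-/

section mApp

variable {n : ℕ}

lemma mApp_add (M N : Matrix (Fin n) (Fin n) ℂ) (v : EuclideanSpace ℂ (Fin n)) :
    mApp (M + N) v = mApp M v + mApp N v := by
  simp only [mApp, map_add, LinearMap.add_apply]

lemma mApp_smul (c : ℂ) (M : Matrix (Fin n) (Fin n) ℂ) (v : EuclideanSpace ℂ (Fin n)) :
    mApp (c • M) v = c • mApp M v := by
  simp only [mApp, map_smul, LinearMap.smul_apply]

lemma mApp_mul (M N : Matrix (Fin n) (Fin n) ℂ) (v : EuclideanSpace ℂ (Fin n)) :
    mApp (M * N) v = mApp M (mApp N v) := by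
  rw [mApp, Matrix.toLpLin_mul_same, LinearMap.comp_apply, mApp, mApp]

lemma inner_mApp_conjTranspose (M : Matrix (Fin n) (Fin n) ℂ) (x v : EuclideanSpace ℂ (Fin n)) :
    ⟪x, mApp Mᴴ v⟫ = ⟪mApp M x, v⟫ := by
  rw [mApp, Matrix.toEuclideanLin_conjTranspose_eq_adjoint, LinearMap.adjoint_inner_right, mApp]

lemma inner_mApp_conjTranspose_mul_self (M : Matrix (Fin n) (Fin n) ℂ)
    (v : EuclideanSpace ℂ (Fin n)) : ⟪v, mApp (Mᴴ * M) v⟫ = (‖mApp M v‖ : ℂ) ^ 2 := by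
  rw [mApp_mul, inner_mApp_conjTranspose, inner_self_eq_norm_sq_to_K]
  rfl

lemma conjTranspose_outer (u w : EuclideanSpace ℂ (Fin n)) : (outer u w)ᴴ = outer w u := by
  ext i j
  simp [outer, Matrix.conjTranspose_apply, mul_comm]

lemma mApp_outer (u w v : EuclideanSpace ℂ (Fin n)) : mApp (outer u w) v = ⟪w, v⟫ • u := by
  ext i
  simp [mApp, Matrix.toLpLin_apply, Matrix.mulVec, dotProduct, outer, PiLp.inner_apply,
    Finset.mul_sum, mul_comm, mul_left_comm]

end mApp

section proj

variable {n : ℕ} {u : EuclideanSpace ℂ (Fin n)}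

lemma proj_add (a b : EuclideanSpace ℂ (Fin n)) : proj u (a + b) = proj u a + proj u b := by
  simp only [proj, inner_add_right, add_smul]
  abel

lemma proj_smul (c : ℂ) (a : EuclideanSpace ℂ (Fin n)) :
    proj u (c • a) = c • proj u a := by
  simp only [proj, inner_smul_right, smul_sub, smul_smul]

lemma inner_self_of_norm_eq_one (hu : ‖u‖ = 1) : ⟪u, u⟫ = 1 := by
  rw [inner_self_eq_norm_sq_to_K, hu]
  norm_num

lemma proj_smul_self (hu : ‖u‖ = 1) (c : ℂ) : proj u (c • u) = 0 := by
  rw [proj_smul, proj, inner_self_of_norm_eq_one hu, one_smul, sub_self, smul_zero]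

lemma inner_proj (hu : ‖u‖ = 1) (t : EuclideanSpace ℂ (Fin n)) : ⟪u, proj u t⟫ = 0 := by
  rw [proj, inner_sub_right, inner_smul_right, inner_self_of_norm_eq_one hu, mul_one, sub_self]

end proj

theorem stmt3 {n : ℕ} (A : Matrix (Fin n) (Fin n) ℂ) (θ : ℂ)
    (u : EuclideanSpace ℂ (Fin n)) (hu : ‖u‖ = 1)
    (t w : EuclideanSpace ℂ (Fin n)) (k : ℂ)
    (E : Matrix (Fin n) (Fin n) ℂ) (hE : E = k • outer u w)
    (hstat : -proj u (mApp Eᴴ (u + proj u t)) +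
        proj u (mApp ((A - θ • 1)ᴴ * (A - θ • 1) + E) u) = 0) :
    (starRingEnd ℂ) k • proj u w =
      mApp ((A - θ • 1)ᴴ * (A - θ • 1)) u - ((‖mApp (A - θ • 1) u‖ : ℂ) ^ 2) • u ∧
    (k ≠ 0 → ∃ c : ℂ, proj u w =
      c • (mApp ((A - θ • 1)ᴴ * (A - θ • 1)) u - ((‖mApp (A - θ • 1) u‖ : ℂ) ^ 2) • u)) := by
  set C := A - θ • 1
  have hEadj : mApp Eᴴ (u + proj u t) = starRingEnd ℂ k • w := by
    rw [hE, Matrix.conjTranspose_smul, mApp_smul, conjTranspose_outer, mApp_outer,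
      inner_add_right, inner_self_of_norm_eq_one hu, inner_proj hu, add_zero, one_smul]
    rfl
  have hEu : proj u (mApp E u) = 0 := by
    rw [hE, mApp_smul, mApp_outer, smul_smul, proj_smul_self hu]
  rw [hEadj, mApp_add, proj_add, hEu, add_zero, proj_smul, neg_add_eq_zero] at hstat
  have hmain : starRingEnd ℂ k • proj u w = mApp (Cᴴ * C) u - ((‖mApp C u‖ : ℂ) ^ 2) • u := by
    rw [hstat, proj, inner_mApp_conjTranspose_mul_self]
  refine ⟨hmain, fun hk => ⟨(starRingEnd ℂ k)⁻¹, ?_⟩⟩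
  rw [← hmain, smul_smul, inv_mul_cancel₀ ((map_ne_zero _).mpr hk), one_smul]
end

section
/- Let A be an n×n Hermitian complex matrix. Let (u_k) be a sequence of unit vectors in ℂⁿ with real Rayleigh quotients ρ_k = ⟨u_k, A u_k⟩, and let (v_k) be a sequence of vectors such that for every k: (i) ⟨u_k, v_k⟩ = 0; (ii) ‖(A−ρ_k I)(u_k + v_k)‖ ≤ ‖(A−ρ_k I)(u_k + w)‖ for every w ∈ ℂⁿ with ⟨u_k, w⟩ = 0; and (iii) u_{k+1} = (u_k + v_k)/‖u_k + v_k‖. Then the sequence of residual norms (‖(A−ρ_k I)u_k‖²) is monotonically nonincreasing, the sequences (‖(A−ρ_k I)u_k‖²) and (‖(A−ρ_k I)u_{k+1}‖²) converge to the same limit, and |ρ_{k+1} − ρ_k| → 0 as k → ∞. -/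
/-!
Shifting by the Rayleigh quotient minimizes the residual of a unit vector: if `‖x‖ = 1` and
`⟪x, y⟫ = ρ` is real, then `‖y - σ x‖² = ‖y - ρ x‖² + (σ - ρ)²` (Pythagoras, since `y - ρ x ⊥ x`).
An MSJD step does not increase the residual for the old shift `ρ_k` (take `w = 0` in the
minimality, and normalization divides by `‖u_k + v_k‖ ≥ 1`), and moving the shift to `ρ_{k+1}`
lowers it by exactly `(ρ_{k+1} - ρ_k)²`. So `r_{k+1} ≤ s_k ≤ r_k` for the residuals
`r_k = ‖(A - ρ_k)u_k‖²` and `s_k = ‖(A - ρ_k)u_{k+1}‖²`; both sequences converge to the same limit,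
and `(ρ_{k+1} - ρ_k)² = s_k - r_{k+1} → 0`.
-/

open scoped ComplexInnerProductSpace Matrix

open Filter Topology

theorem norm_sub_smul_sq_eq_of_inner_eq_ofReal {𝕜 E : Type*} [RCLike 𝕜] [NormedAddCommGroup E]
    [InnerProductSpace 𝕜 E] {x y : E} (hx : ‖x‖ = 1) {ρ : ℝ} (hρ : (ρ : 𝕜) = inner 𝕜 x y)
    (σ : ℝ) : ‖y - (σ : 𝕜) • x‖ ^ 2 = ‖y - (ρ : 𝕜) • x‖ ^ 2 + (σ - ρ) ^ 2 := by
  have hperp : inner 𝕜 (y - (ρ : 𝕜) • x) (((ρ : 𝕜) - σ) • x) = 0 := by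
    rw [inner_smul_right, ← inner_conj_symm, inner_sub_right, inner_smul_right,
      inner_self_eq_norm_sq_to_K, hx, ← hρ]
    simp
  have hsplit : y - (σ : 𝕜) • x = (y - (ρ : 𝕜) • x) + ((ρ : 𝕜) - σ) • x := by
    rw [sub_smul]; abel
  rw [hsplit, sq, sq, norm_add_sq_eq_norm_sq_add_norm_sq_of_inner_eq_zero _ _ hperp, norm_smul,
    hx, mul_one, ← RCLike.ofReal_sub, RCLike.norm_ofReal, abs_mul_abs_self]
  ring

theorem one_le_norm_add_of_inner_eq_zero {𝕜 E : Type*} [RCLike 𝕜] [NormedAddCommGroup E]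
    [InnerProductSpace 𝕜 E] {u v : E} (hu : ‖u‖ = 1) (huv : inner 𝕜 u v = 0) :
    1 ≤ ‖u + v‖ := by
  have := norm_add_sq_eq_norm_sq_add_norm_sq_of_inner_eq_zero u v huv
  nlinarith [norm_nonneg (u + v), sq_nonneg ‖v‖]

theorem norm_apply_inv_norm_smul_le {E F : Type*} [NormedAddCommGroup E] [NormedSpace ℂ E]
    [NormedAddCommGroup F] [NormedSpace ℂ F] (T : E →ₗ[ℂ] F) {x : E} (hx : 1 ≤ ‖x‖) :
    ‖T (‖x‖⁻¹ • x)‖ ≤ ‖T x‖ := by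
  rw [LinearMap.map_smul_of_tower, norm_smul, norm_inv, norm_norm]
  exact mul_le_of_le_one_left (norm_nonneg _) (inv_le_one_of_one_le₀ hx)

theorem mApp_sub_smul_one {n : ℕ} (A : Matrix (Fin n) (Fin n) ℂ) (c : ℂ)
    (x : EuclideanSpace ℂ (Fin n)) : mApp (A - c • 1) x = mApp A x - c • x := by
  simp [mApp]

theorem antitone_and_tendsto_of_succ_le_le_self {r s : ℕ → ℝ} (hr : ∀ k, 0 ≤ r k)
    (hrs : ∀ k, r (k + 1) ≤ s k) (hsr : ∀ k, s k ≤ r k) :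
    Antitone r ∧ ∃ L, Tendsto r atTop (𝓝 L) ∧ Tendsto s atTop (𝓝 L) := by
  have hanti : Antitone r := antitone_nat_of_succ_le fun k => (hrs k).trans (hsr k)
  have hlim : Tendsto r atTop (𝓝 (⨅ k, r k)) :=
    tendsto_atTop_ciInf hanti ⟨0, by rintro _ ⟨k, rfl⟩; exact hr k⟩
  exact ⟨hanti, _, hlim,
    tendsto_of_tendsto_of_tendsto_of_le_of_le ((tendsto_add_atTop_iff_nat 1).2 hlim) hlim hrs hsr⟩

theorem stmt5_general {n : ℕ} (A : Matrix (Fin n) (Fin n) ℂ)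
    (u v : ℕ → EuclideanSpace ℂ (Fin n)) (ρ : ℕ → ℝ)
    (hu : ∀ k, ‖u k‖ = 1)
    (hρ : ∀ k, ((ρ k : ℂ)) = ⟪u k, mApp A (u k)⟫)
    (horth : ∀ k, ⟪u k, v k⟫ = 0)
    (hmin : ∀ k, ∀ w : EuclideanSpace ℂ (Fin n), ⟪u k, w⟫ = (0 : ℂ) →
      ‖mApp (A - (ρ k : ℂ) • 1) (u k + v k)‖ ≤ ‖mApp (A - (ρ k : ℂ) • 1) (u k + w)‖)
    (hnext : ∀ k, u (k + 1) = ‖u k + v k‖⁻¹ • (u k + v k)) :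
    Antitone (fun k => ‖mApp (A - (ρ k : ℂ) • 1) (u k)‖ ^ 2) ∧
    (∃ L : ℝ,
      Filter.Tendsto (fun k => ‖mApp (A - (ρ k : ℂ) • 1) (u k)‖ ^ 2)
        Filter.atTop (nhds L) ∧
      Filter.Tendsto (fun k => ‖mApp (A - (ρ k : ℂ) • 1) (u (k + 1))‖ ^ 2)
        Filter.atTop (nhds L)) ∧
    Filter.Tendsto (fun k => |ρ (k + 1) - ρ k|) Filter.atTop (nhds 0) := by
  set r : ℕ → ℝ := fun k => ‖mApp (A - (ρ k : ℂ) • 1) (u k)‖ ^ 2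
  set s : ℕ → ℝ := fun k => ‖mApp (A - (ρ k : ℂ) • 1) (u (k + 1))‖ ^ 2
  have hshift (k : ℕ) : s k = r (k + 1) + (ρ k - ρ (k + 1)) ^ 2 := by
    simp only [s, r, mApp_sub_smul_one]
    exact norm_sub_smul_sq_eq_of_inner_eq_ofReal (hu (k + 1)) (hρ (k + 1)) (ρ k)
  have hstep (k : ℕ) : s k ≤ r k := by
    have hw0 := hmin k 0 (inner_zero_right _)
    rw [add_zero] at hw0
    have := (norm_apply_inv_norm_smul_le (Matrix.toEuclideanLin (A - (ρ k : ℂ) • 1))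
      (one_le_norm_add_of_inner_eq_zero (hu k) (horth k))).trans hw0
    exact pow_le_pow_left₀ (norm_nonneg _) (hnext k ▸ this) 2
  obtain ⟨hanti, L, hr, hs⟩ := antitone_and_tendsto_of_succ_le_le_self (fun k => by positivity)
    (fun k => (hshift k).symm ▸ le_add_of_nonneg_right (sq_nonneg _)) hstep
  refine ⟨hanti, ⟨L, hr, hs⟩, ?_⟩
  have hgap : Tendsto (fun k => s k - r (k + 1)) atTop (𝓝 0) := by
    simpa using hs.sub ((tendsto_add_atTop_iff_nat 1).2 hr)
  have hsqrt := hgap.sqrt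
  rw [Real.sqrt_zero] at hsqrt
  refine hsqrt.congr fun k => ?_
  rw [hshift, add_sub_cancel_left, Real.sqrt_sq_eq_abs, abs_sub_comm]

theorem stmt5 {n : ℕ} (A : Matrix (Fin n) (Fin n) ℂ) (hA : A.IsHermitian)
    (u v : ℕ → EuclideanSpace ℂ (Fin n)) (ρ : ℕ → ℝ)
    (hu : ∀ k, ‖u k‖ = 1)
    (hρ : ∀ k, ((ρ k : ℂ)) = ⟪u k, mApp A (u k)⟫)
    (horth : ∀ k, ⟪u k, v k⟫ = 0)
    (hmin : ∀ k, ∀ w : EuclideanSpace ℂ (Fin n), ⟪u k, w⟫ = (0 : ℂ) →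
      ‖mApp (A - (ρ k : ℂ) • 1) (u k + v k)‖ ≤ ‖mApp (A - (ρ k : ℂ) • 1) (u k + w)‖)
    (hnext : ∀ k, u (k + 1) = ‖u k + v k‖⁻¹ • (u k + v k)) :
    Antitone (fun k => ‖mApp (A - (ρ k : ℂ) • 1) (u k)‖ ^ 2) ∧
    (∃ L : ℝ,
      Filter.Tendsto (fun k => ‖mApp (A - (ρ k : ℂ) • 1) (u k)‖ ^ 2)
        Filter.atTop (nhds L) ∧
      Filter.Tendsto (fun k => ‖mApp (A - (ρ k : ℂ) • 1) (u (k + 1))‖ ^ 2)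
        Filter.atTop (nhds L)) ∧
    Filter.Tendsto (fun k => |ρ (k + 1) - ρ k|) Filter.atTop (nhds 0) :=
  stmt5_general A u v ρ hu hρ horth hmin hnext
end
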